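/- Let i, j, k, l be integers with gcd(i,j) = 1 and gcd(k,l) = 1. Then the group presented by generators x, y, b, t and relators xy = yx, xb = bx, t(xⁱyʲ)t⁻¹ = xᵏbˡ admits a surjective group homomorphism onto the free group F₂ of rank 2. -/

import Mathlib

/-- Generators `x, y, b, t`. -/
def x5 : FreeGroup (Fin 4) := FreeGroup.of 0
def y5 : FreeGroup (Fin 4) := FreeGroup.of 1
def b5 : FreeGroup (Fin 4) := FreeGroup.of 2
def t5 : FreeGroup (Fin 4) := FreeGroup.of 3

/-- Relators `xy = yx`, `xb = bx`, `t(xⁱyʲ)t⁻¹ = xᵏbˡ`. -/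
def rels5 (i j k l : ℤ) : Set (FreeGroup (Fin 4)) :=
  {x5 * y5 * (y5 * x5)⁻¹, x5 * b5 * (b5 * x5)⁻¹,
    t5 * (x5 ^ i * y5 ^ j) * t5⁻¹ * (x5 ^ k * b5 ^ l)⁻¹}

/-! Kill `x`; the vertex groups then become `⟨y⟩` and `⟨b⟩`, and the group maps onto the
fundamental group `⟨y, b, t | t yʲ t⁻¹ = bˡ⟩` of the loop. Writing `j = d j'`, `l = d l'` with
`j', l'` coprime, send `t ↦ S`, `y ↦ Aˡ'` and `b ↦ S Aʲ' S⁻¹` in `F(A, S)`: the remaining relator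
becomes `S A^(l' j) S⁻¹ = S A^(j' l) S⁻¹`, and `A` lies in the image since `Aʲ'` and `Aˡ'` do. -/

theorem Int.exists_isCoprime_mul_eq_mul (j l : ℤ) :
    ∃ j' l' : ℤ, IsCoprime j' l' ∧ l' * j = j' * l := by
  rcases eq_or_ne (Int.gcd j l) 0 with hd | hd
  · obtain ⟨rfl, rfl⟩ := Int.gcd_eq_zero_iff.mp hd
    exact ⟨1, 0, isCoprime_one_left, by simp⟩
  · obtain ⟨d, j', l', -, hgcd, rfl, rfl⟩ := Int.exists_gcd_one' (Nat.pos_of_ne_zero hd)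
    refine ⟨j', l', Int.isCoprime_iff_gcd_eq_one.mpr hgcd, ?_⟩
    ring

theorem Subgroup.mem_of_zpow_mem_of_isCoprime {G : Type*} [Group G] {H : Subgroup G} {a : G}
    {m n : ℤ} (hmn : IsCoprime m n) (hm : a ^ m ∈ H) (hn : a ^ n ∈ H) : a ∈ H := by
  obtain ⟨u, v, huv⟩ := hmn
  have : a = (a ^ m) ^ u * (a ^ n) ^ v := by
    rw [← zpow_mul, ← zpow_mul, ← zpow_add, mul_comm m, mul_comm n, huv, zpow_one]
  rw [this]
  exact mul_mem (zpow_mem hm u) (zpow_mem hn v)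

theorem FreeGroup.surjective_of_of_mem_range {α G : Type*} [Group G] (f : G →* FreeGroup α)
    (h : ∀ a, FreeGroup.of a ∈ f.range) : Function.Surjective f := by
  rw [← MonoidHom.range_eq_top, eq_top_iff, ← FreeGroup.closure_range_of, Subgroup.closure_le]
  rintro _ ⟨a, rfl⟩
  exact h a

/-- The images of `x, y, b, t` in `F(A, S)`, where `A = of 0` and `S = of 1`. -/
def loopQuotientImages (j' l' : ℤ) : Fin 4 → FreeGroup (Fin 2) :=
  ![1, .of 0 ^ l', .of 1 * .of 0 ^ j' * (.of 1)⁻¹, .of 1]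

theorem lift_loopQuotientImages_rels5 {i j k l j' l' : ℤ} (h : l' * j = j' * l) :
    ∀ r ∈ rels5 i j k l, FreeGroup.lift (loopQuotientImages j' l') r = 1 := by
  intro r hr
  simp only [rels5, Set.mem_insert_iff, Set.mem_singleton_iff] at hr
  rcases hr with rfl | rfl | rfl <;>
    simp only [loopQuotientImages, x5, y5, b5, t5, map_mul, map_inv, map_zpow,
      FreeGroup.lift_apply_of, Matrix.cons_val, one_zpow, one_mul, mul_one]
  · exact mul_inv_cancel _
  · exact mul_inv_cancel _
  · rw [conj_zpow, ← zpow_mul, ← zpow_mul, h, mul_inv_cancel]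

theorem single_loop_surjects_F2_general (i j k l : ℤ) :
    ∃ f : PresentedGroup (rels5 i j k l) →* FreeGroup (Fin 2),
      Function.Surjective f := by
  obtain ⟨j', l', hcop, h⟩ := Int.exists_isCoprime_mul_eq_mul j l
  set f := PresentedGroup.toGroup (lift_loopQuotientImages_rels5 (i := i) (k := k) h)
  have hf (a : Fin 4) : loopQuotientImages j' l' a ∈ f.range :=
    ⟨PresentedGroup.of a, PresentedGroup.toGroup.of _⟩
  have hS : (FreeGroup.of 1 : FreeGroup (Fin 2)) ∈ f.range := hf 3
  have hA : (FreeGroup.of 0 : FreeGroup (Fin 2)) ∈ f.range := by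
    refine Subgroup.mem_of_zpow_mem_of_isCoprime hcop ?_ (hf 1)
    simpa [loopQuotientImages, mul_assoc] using mul_mem (mul_mem (inv_mem hS) (hf 2)) hS
  refine ⟨f, FreeGroup.surjective_of_of_mem_range f fun a => ?_⟩
  fin_cases a
  exacts [hA, hS]

/-- An instance of Proposition 3.4: a tubular group with maximal edge inclusions whose
graph has a single loop which is not a self loop surjects the free group `F₂`. -/
theorem single_loop_surjects_F2 (i j k l : ℤ)
    (hij : Int.gcd i j = 1) (hkl : Int.gcd k l = 1) :
    ∃ f : PresentedGroup (rels5 i j k l) →* FreeGroup (Fin 2),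
      Function.Surjective f :=
  single_loop_surjects_F2_general i j k l
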